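/- Let R be a commutative local ring with residue field k, let L be a finite free R-module of rank m, and let f : L → L be an R-linear endomorphism. Set s := dim_k((L/f(L)) ⊗_R k) and d := m − s, and assume that the (d+1)-st exterior power of f vanishes: ⋀_R^{d+1} f = 0. Then L/f(L) is a free R-module of rank s. -/

import Mathlib

/-!
Let `k` be the residue field and `N = f(L)`. By right exactness of `k ⊗ -`, the image of
`k ⊗ N` in `k ⊗ L` has dimension `d`. Lifting a basis of `k ⊗ L` that extends a basis of this
image gives, by Nakayama, an `R`-basis `e₁, …, e_d, e'₁, …` of `L` with `eᵢ = f(xᵢ)`. For every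
`z`, `f z ∧ e₁ ∧ ⋯ ∧ e_d = ⋀^{d+1} f (z ∧ x₁ ∧ ⋯ ∧ x_d) = 0`, and pairing this with wedges of
coordinate forms shows that every coordinate of `f z` outside `e₁, …, e_d` vanishes. So `N` is
spanned by `e₁, …, e_d`, `L/N` is free on the images of the `e'ⱼ`, and its rank is
`dim_k (k ⊗ L/N) = s`.
-/

open scoped TensorProduct
open Module

theorem Module.Basis.repr_eq_zero_of_ιMulti_cons_eq_zero {R M I : Type*} [CommRing R]
    [AddCommGroup M] [Module R M] (b : Basis I R M) {n : ℕ} {t : Fin n → I}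
    (ht : Function.Injective t) {i : I} (hi : i ∉ Set.range t) {z : M}
    (h : ExteriorAlgebra.ιMulti R (n + 1) (Fin.cons z (b ∘ t)) = 0) :
    b.repr z i = 0 := by
  classical
  set v : Fin (n + 1) → M := Fin.cons z (b ∘ t)
  set φ : Fin (n + 1) → Dual R M := Fin.cons (b.coord i) (b.coord ∘ t)
  set A : Matrix (Fin (n + 1)) (Fin (n + 1)) R := .of fun a c => φ c (v a)
  have hA : A.det = 0 := by
    rw [← exteriorPower.pairingDual_ιMulti_ιMulti,
      show exteriorPower.ιMulti R (n + 1) v = 0 from Subtype.ext h, map_zero]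
  have hcol : ∀ a : Fin n, A a.succ 0 = 0 := fun a => by
    simp [A, φ, v, show t a ≠ i from fun hti => hi ⟨a, hti⟩]
  have hminor : A.submatrix Fin.succ Fin.succ = 1 := by
    ext a c
    simp [A, φ, v, Matrix.one_apply, Finsupp.single_apply, ht.eq_iff]
  rw [Matrix.det_succ_column_zero, Fin.sum_univ_succ, Finset.sum_eq_zero (fun a _ => by
    rw [hcol, mul_zero, zero_mul]), Fin.succAbove_zero, hminor] at hA
  simpa [A, φ, v] using hA

theorem Module.Basis.mem_span_of_ιMulti_cons_eq_zero {R M I : Type*} [CommRing R]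
    [AddCommGroup M] [Module R M] (b : Basis I R M) {n : ℕ} {t : Fin n → I}
    (ht : Function.Injective t) {z : M}
    (h : ExteriorAlgebra.ιMulti R (n + 1) (Fin.cons z (b ∘ t)) = 0) :
    z ∈ Submodule.span R (Set.range (b ∘ t)) := by
  rw [Set.range_comp, b.mem_span_image]
  intro i hi
  by_contra hit
  exact Finsupp.mem_support_iff.mp hi (b.repr_eq_zero_of_ιMulti_cons_eq_zero ht hit h)

theorem Module.Basis.free_quotient_span_inl {R M ι κ : Type*} [CommRing R] [AddCommGroup M]
    [Module R M] (b : Basis (ι ⊕ κ) R M) :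
    Module.Free R (M ⧸ Submodule.span R (Set.range (b ∘ Sum.inl))) := by
  have hcompl := b.linearIndependent.isCompl_span_image b.span_eq Set.isCompl_range_inl_range_inr
  rw [← Set.range_comp, ← Set.range_comp] at hcompl
  have : Module.Free R (Submodule.span R (Set.range (b ∘ Sum.inr))) :=
    .of_basis (.span (b.linearIndependent.comp _ Sum.inr_injective))
  exact .of_equiv (Submodule.quotientEquivOfIsCompl _ _ hcompl).symm

theorem Submodule.exists_basis_sum_inl_mem {K V : Type*} [DivisionRing K] [AddCommGroup V]
    [Module K V] [FiniteDimensional K V] (W : Submodule K V) :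
    ∃ n, ∃ b : Basis (Fin (finrank K W) ⊕ Fin n) K V, ∀ i, b (.inl i) ∈ W := by
  obtain ⟨W', hW⟩ := W.exists_isCompl
  exact ⟨_, ((finBasis K W).prod (finBasis K W')).map (prodEquivOfIsCompl W W' hW),
    fun i => by simp⟩

theorem Submodule.finrank_range_baseChange_add_finrank_baseChange_quotient {R L K : Type*}
    [CommRing R] [AddCommGroup L] [Module R L] [Module.Finite R L] [Field K] [Algebra R K]
    (N : Submodule R L) :
    finrank K (LinearMap.range (N.subtype.baseChange K)) + finrank K (K ⊗[R] (L ⧸ N)) =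
      finrank K (K ⊗[R] L) := by
  have hexact : Function.Exact (N.subtype.baseChange K) (N.mkQ.baseChange K) :=
    lTensor_exact K (LinearMap.exact_subtype_mkQ N) N.mkQ_surjective
  have hsurj : Function.Surjective (N.mkQ.baseChange K) :=
    LinearMap.lTensor_surjective K N.mkQ_surjective
  rw [← hexact.linearMap_ker_eq, ← (N.mkQ.baseChange K).finrank_range_add_finrank_ker,
    LinearMap.range_eq_top.mpr hsurj, finrank_top, add_comm]

open IsLocalRing in
theorem IsLocalRing.exists_basis_sum_inl_mem {R L : Type*} [CommRing R] [IsLocalRing R]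
    [AddCommGroup L] [Module R L] [Module.Free R L] [Module.Finite R L] (N : Submodule R L) :
    ∃ n, ∃ b : Basis (Fin (finrank R L - finrank (ResidueField R)
      (ResidueField R ⊗[R] (L ⧸ N))) ⊕ Fin n) R L, ∀ i, b (.inl i) ∈ N := by
  set k := ResidueField R
  set W := LinearMap.range (N.subtype.baseChange k)
  have hW : finrank k W = finrank R L - finrank k (k ⊗[R] (L ⧸ N)) := by
    have := N.finrank_range_baseChange_add_finrank_baseChange_quotient (K := k)
    rw [show finrank k (k ⊗[R] L) = finrank R L from finrank_baseChange] at this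
    exact Nat.eq_sub_of_add_eq this
  obtain ⟨n, bk, hbk⟩ := W.exists_basis_sum_inl_mem
  have hliftW : ∀ w ∈ W, ∃ x : N, (1 : k) ⊗ₜ[R] (x : L) = w := by
    rintro _ ⟨w, rfl⟩
    obtain ⟨x, rfl⟩ := TensorProduct.mk_surjective R N k Ideal.Quotient.mk_surjective w
    exact ⟨x, rfl⟩
  choose x hx using fun i => hliftW _ (hbk i)
  choose y hy using fun j => TensorProduct.mk_surjective R L k Ideal.Quotient.mk_surjective
    (bk (.inr j))
  set v := Sum.elim (fun i => (x i : L)) y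
  have hv : TensorProduct.mk R k L 1 ∘ v = bk := by
    funext j
    rcases j with i | j
    exacts [hx i, hy j]
  have := finitePresentation_of_projective R L
  obtain ⟨b, hb⟩ := exists_basis_of_basis_baseChange v (hv ▸ bk.linearIndependent)
    (by rw [hv, bk.span_eq])
    (Flat.rTensor_preserves_injective_linearMap _ Subtype.val_injective)
  exact ⟨n, b.reindex (.sumCongr (finCongr hW) (.refl _)), fun i => by simp [hb, v]⟩

theorem statement8 (R : Type) [CommRing R] [IsLocalRing R]
    (L : Type) [AddCommGroup L] [Module R L]
    [Module.Free R L] [Module.Finite R L]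
    (m : ℕ) (hm : Module.finrank R L = m)
    (f : L →ₗ[R] L)
    (s : ℕ)
    (hs : s = Module.finrank (IsLocalRing.ResidueField R)
      ((IsLocalRing.ResidueField R) ⊗[R] (L ⧸ LinearMap.range f)))
    (d : ℕ) (hd : d = m - s)
    (hf : ∀ w ∈ ⋀[R]^(d+1) L, ExteriorAlgebra.map f w = 0) :
    Module.Free R (L ⧸ LinearMap.range f) ∧
      Module.finrank R (L ⧸ LinearMap.range f) = s := by
  subst hs hd hm
  obtain ⟨n, b, hb⟩ := IsLocalRing.exists_basis_sum_inl_mem (LinearMap.range f)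
  choose x hx using hb
  have hrange : LinearMap.range f = Submodule.span R (Set.range (b ∘ Sum.inl)) := by
    refine le_antisymm ?_ (Submodule.span_le.mpr (Set.range_subset_iff.mpr fun i => ⟨x i, hx i⟩))
    rintro _ ⟨z, rfl⟩
    refine b.mem_span_of_ιMulti_cons_eq_zero Sum.inl_injective ?_
    rw [show b ∘ Sum.inl = f ∘ x from funext fun i => (hx i).symm, ← Fin.comp_cons,
      ← ExteriorAlgebra.map_apply_ιMulti]
    exact hf _ (ExteriorAlgebra.ιMulti_range R _ ⟨_, rfl⟩)
  have hfree : Module.Free R (L ⧸ LinearMap.range f) := hrange ▸ b.free_quotient_span_inl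
  exact ⟨hfree, finrank_baseChange.symm⟩
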